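/- arXiv:2202.00880 — 3 statements merged into one kernel-verified Lean document; each statement's English description precedes it below -/
import Mathlib

section
/- Let (v_α) be an orthonormal basis of u(N) with respect to the real inner product ⟨X,Y⟩ = Re Tr(X Y*). Then the sum over α of v_α² equals −N times the identity matrix I_N. -/
open Matrix

lemma trace_single_mul {N : ℕ} (A : Matrix (Fin N) (Fin N) ℂ) (j k : Fin N) :
    trace ((Matrix.of fun p q => if p = j ∧ q = k then (1:ℂ) else 0) * A) = A k j := by
  simp [Matrix.trace, Matrix.diag, Matrix.mul_apply, ite_and, Finset.sum_ite_eq]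

/-- For an orthonormal basis `(v_α)` of `u(N)` (skew-Hermitian matrices) under the real
inner product `⟨X,Y⟩ = Re Tr(X Yᴴ)`, one has `∑_α v_α² = −N • I`. -/
theorem stmt3 (N : ℕ) (ι : Type) [Fintype ι] [DecidableEq ι]
    (v : ι → Matrix (Fin N) (Fin N) ℂ)
    (hskew : ∀ α, (v α)ᴴ = -(v α))
    (horth : ∀ α β, (Matrix.trace (v α * (v β)ᴴ)).re = if α = β then 1 else 0)
    (hcomplete : ∀ X : Matrix (Fin N) (Fin N) ℂ, Xᴴ = -X →
      X = ∑ α, (Matrix.trace (X * (v α)ᴴ)).re • v α) :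
    ∑ α, v α * v α = (-(N : ℝ)) • (1 : Matrix (Fin N) (Fin N) ℂ) := by
  have hconj : ∀ α (j k : Fin N), star ((v α) j k) = -((v α) k j) := by
    intro α j k
    have := congrFun (congrFun (hskew α) k) j
    simpa [conjTranspose_apply] using this
  have key : ∀ j k p q : Fin N,
      ∑ α, (v α) j k * (v α) p q = -(if p = k ∧ q = j then (1:ℂ) else 0) := by
    intro j k p q
    set E : Fin N → Fin N → Matrix (Fin N) (Fin N) ℂ :=
      fun a b => Matrix.of fun p q => if p = a ∧ q = b then (1:ℂ) else 0 with hE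
    have hEH : ∀ a b, (E a b)ᴴ = E b a := by
      intro a b
      ext p q
      simp only [hE, conjTranspose_apply, Matrix.of_apply]
      rw [apply_ite (star : ℂ → ℂ), star_one, star_zero]
      exact if_congr and_comm rfl rfl
    -- Y = E j k - E k j is skew-Hermitian
    have hY : (E j k - E k j)ᴴ = -(E j k - E k j) := by
      rw [conjTranspose_sub, hEH, hEH, neg_sub]
    -- Z = I • (E j k + E k j) is skew-Hermitian
    have hZ : (Complex.I • (E j k + E k j))ᴴ = -(Complex.I • (E j k + E k j)) := by
      rw [conjTranspose_smul, conjTranspose_add, hEH, hEH]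
      simp [Complex.conj_I, add_comm]
    have eY := hcomplete _ hY
    have eZ := hcomplete _ hZ
    -- coefficients
    have cY : ∀ α, (trace ((E j k - E k j) * (v α)ᴴ)).re = 2 * ((v α) j k).re := by
      intro α
      rw [sub_mul, trace_sub, trace_single_mul, trace_single_mul]
      rw [conjTranspose_apply, conjTranspose_apply, hconj α k j]
      simp [Complex.sub_re, Complex.neg_re]
      ring
    have cZ : ∀ α, (trace ((Complex.I • (E j k + E k j)) * (v α)ᴴ)).re
        = 2 * ((v α) j k).im := by
      intro α
      rw [smul_mul_assoc, trace_smul, add_mul, trace_add, trace_single_mul,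
        trace_single_mul, conjTranspose_apply, conjTranspose_apply, hconj α k j]
      simp [smul_eq_mul, Complex.mul_re, Complex.add_re, Complex.add_im, Complex.neg_re,
        Complex.neg_im]
      ring
    have eY' := congrFun (congrFun eY p) q
    have eZ' := congrFun (congrFun eZ p) q
    simp only [Matrix.sub_apply, Matrix.smul_apply, Matrix.add_apply, Matrix.of_apply,
      Matrix.sum_apply, hE] at eY' eZ'
    simp only [Complex.real_smul, smul_eq_mul] at eY' eZ'
    rw [Finset.sum_congr rfl (fun α _ => by rw [cY α])] at eY'
    rw [Finset.sum_congr rfl (fun α _ => by rw [cZ α])] at eZ'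
    have comb : (((if p = j ∧ q = k then (1:ℂ) else 0) - (if p = k ∧ q = j then 1 else 0))
        + Complex.I * (Complex.I * ((if p = j ∧ q = k then (1:ℂ) else 0)
          + (if p = k ∧ q = j then 1 else 0))))
        = ∑ α, (((2 * ((v α) j k).re : ℝ) : ℂ) * (v α) p q
            + Complex.I * (((2 * ((v α) j k).im : ℝ) : ℂ) * (v α) p q)) := by
      rw [Finset.sum_add_distrib, ← eY', ← Finset.mul_sum, ← eZ']
    have comb2 : ∀ α, (((2 * ((v α) j k).re : ℝ) : ℂ) * (v α) p q
        + Complex.I * (((2 * ((v α) j k).im : ℝ) : ℂ) * (v α) p q))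
        = 2 * ((v α) j k * (v α) p q) := by
      intro α
      have : (((2 * ((v α) j k).re : ℝ) : ℂ) + Complex.I * ((2 * ((v α) j k).im : ℝ) : ℂ))
          = 2 * (v α) j k := by
        rw [mul_comm Complex.I]
        rw [← Complex.re_add_im ((v α) j k)]
        push_cast
        simp [Complex.ext_iff]
      calc _ = (((2 * ((v α) j k).re : ℝ) : ℂ)
            + Complex.I * ((2 * ((v α) j k).im : ℝ) : ℂ)) * (v α) p q := by ring
        _ = 2 * ((v α) j k * (v α) p q) := by rw [this]; ring
    rw [Finset.sum_congr rfl (fun α _ => comb2 α), ← Finset.mul_sum] at comb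
    have h2 : (2:ℂ) * ∑ α, (v α) j k * (v α) p q
        = 2 * (-(if p = k ∧ q = j then (1:ℂ) else 0)) := by
      rw [← comb]
      split_ifs <;> ring_nf <;> simp [Complex.I_sq] <;> ring_nf
    exact mul_left_cancel₀ two_ne_zero h2
  -- finish
  ext i l
  have : (∑ α, v α * v α) i l = ∑ p : Fin N, ∑ α, (v α) i p * (v α) p l := by
    rw [Matrix.sum_apply]
    rw [Finset.sum_comm]
    exact Finset.sum_congr rfl fun α _ => Matrix.mul_apply
  rw [this, Finset.sum_congr rfl (fun p _ => key i p p l)]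
  by_cases h : i = l <;>
    simp [h, eq_comm, Matrix.smul_apply, Matrix.one_apply, Complex.real_smul,
      Finset.sum_const]
end

section
/- Magic formula (quadratic form): for any N×N complex matrix M and any orthonormal basis (v_α) of the Lie algebra g ∈ {so(N), u(N), su(N)}, the sum over α of v_α M v_α equals λ Tr(M) I_N + ν M + μ Mᵗ, where (λ,ν,μ) = (−1/2, 0, 1/2) for so(N), (−1, 0, 0) for u(N), and (−1, 1/N, 0) for su(N). -/
open Matrix

lemma trace_std {N : ℕ} (k l : Fin N) (A : Matrix (Fin N) (Fin N) ℂ) :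
    trace (Matrix.single k l (1:ℂ) * A) = A l k := by
  simp [trace, diag, mul_apply, Matrix.single, ite_and, Finset.sum_ite_eq]

lemma std_conjT {N : ℕ} (k l : Fin N) :
    (Matrix.single k l (1:ℂ))ᴴ = Matrix.single l k 1 := by
  ext a b
  simp [conjTranspose_apply, Matrix.single, and_comm]

lemma entry_eq {N : ℕ} {ι : Type} [Fintype ι] (v : ι → Matrix (Fin N) (Fin N) ℂ)
    (X : Matrix (Fin N) (Fin N) ℂ)
    (h : X = ∑ α, (Matrix.trace (X * (v α)ᴴ)).re • v α) (i j : Fin N) :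
    X i j = ∑ α, ((Matrix.trace (X * (v α)ᴴ)).re : ℂ) * v α i j := by
  conv_lhs => rw [h]
  simp [Matrix.sum_apply, Complex.real_smul]

lemma mul_split (z w : ℂ) : z * w = (z.re:ℂ) * w + Complex.I * ((z.im:ℂ) * w) := by
  nth_rewrite 1 [← Complex.re_add_im z]; ring

lemma so_rel {N : ℕ} {ι : Type} [Fintype ι] (v : ι → Matrix (Fin N) (Fin N) ℂ)
    (hv : ∀ α, (v α)ᵀ = -(v α) ∧ ∀ i j, ((v α) i j).im = 0)
    (hcomp : ∀ X : Matrix (Fin N) (Fin N) ℂ, Xᵀ = -X → (∀ i j, (X i j).im = 0) →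
        X = ∑ α, (Matrix.trace (X * (v α)ᴴ)).re • v α)
    (i j k l : Fin N) :
    ∑ α, v α k l * v α i j =
      (1/2 : ℂ) * ((if k = i ∧ l = j then 1 else 0) - (if l = i ∧ k = j then 1 else 0)) := by
  set X : Matrix (Fin N) (Fin N) ℂ := Matrix.single k l 1 - Matrix.single l k 1 with hXdef
  have hXt : Xᵀ = -X := by
    ext a b
    simp [hXdef, Matrix.single, and_comm]
  have hXim : ∀ a b, (X a b).im = 0 := by
    intro a b
    simp only [hXdef, Matrix.sub_apply, Matrix.single, of_apply, Complex.sub_im]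
    split_ifs <;> simp
  have he := entry_eq v X (hcomp X hXt hXim) i j
  have hc : ∀ α, ((Matrix.trace (X * (v α)ᴴ)).re : ℂ) = 2 * v α k l := by
    intro α
    have h1 : Matrix.trace (X * (v α)ᴴ) = star (v α k l) - star (v α l k) := by
      rw [hXdef, sub_mul, trace_sub, trace_std, trace_std, conjTranspose_apply,
        conjTranspose_apply]
    have hlk : v α l k = -(v α k l) := by
      have := congrFun (congrFun (hv α).1 k) l
      simpa using this
    have him := (hv α).2 k l
    have hre : ((v α k l).re : ℂ) = v α k l := by
      have h2 := Complex.re_add_im (v α k l)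
      rw [him] at h2
      simpa using h2
    rw [h1]
    simp only [Complex.sub_re, Complex.star_def, Complex.conj_re, hlk, Complex.neg_re]
    push_cast
    rw [hre]
    ring
  have hXij : X i j = 2 * ∑ α, v α k l * v α i j := by
    rw [he, Finset.mul_sum]
    exact Finset.sum_congr rfl fun α _ => by rw [hc α]; ring
  have hXval : X i j = (if k = i ∧ l = j then (1:ℂ) else 0) - (if l = i ∧ k = j then 1 else 0) := by
    simp [hXdef, Matrix.single]
  rw [hXval] at hXij
  linear_combination -hXij / 2

lemma u_rel {N : ℕ} {ι : Type} [Fintype ι] (v : ι → Matrix (Fin N) (Fin N) ℂ)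
    (hv : ∀ α, (v α)ᴴ = -(v α))
    (hcomp : ∀ X : Matrix (Fin N) (Fin N) ℂ, Xᴴ = -X →
        X = ∑ α, (Matrix.trace (X * (v α)ᴴ)).re • v α)
    (i j k l : Fin N) :
    ∑ α, v α k l * v α i j = -(if l = i ∧ k = j then (1:ℂ) else 0) := by
  have hvc : ∀ α (a b : Fin N), (starRingEnd ℂ) (v α b a) = -(v α a b) := by
    intro α a b
    have := congrFun (congrFun (hv α) a) b
    simpa [conjTranspose_apply] using this
  -- first equation (real parts)
  set X1 : Matrix (Fin N) (Fin N) ℂ := Matrix.single k l 1 - Matrix.single l k 1 with hX1def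
  have hX1h : X1ᴴ = -X1 := by
    rw [hX1def, conjTranspose_sub, std_conjT, std_conjT]
    exact (neg_sub _ _).symm
  have he1 := entry_eq v X1 (hcomp X1 hX1h) i j
  have hc1 : ∀ α, ((Matrix.trace (X1 * (v α)ᴴ)).re : ℂ) = 2 * ((v α k l).re : ℂ) := by
    intro α
    have h1 : Matrix.trace (X1 * (v α)ᴴ) = star (v α k l) - star (v α l k) := by
      rw [hX1def, sub_mul, trace_sub, trace_std, trace_std, conjTranspose_apply,
        conjTranspose_apply]
    have hre : (v α l k).re = -(v α k l).re := by
      have := congrArg Complex.re (hvc α k l)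
      simpa using this
    rw [h1]
    simp only [Complex.sub_re, Complex.star_def, Complex.conj_re, hre]
    push_cast
    ring
  have h1 : ∑ α, ((v α k l).re : ℂ) * v α i j =
      (1/2 : ℂ) * ((if k = i ∧ l = j then 1 else 0) - (if l = i ∧ k = j then 1 else 0)) := by
    have hXij : X1 i j = 2 * ∑ α, ((v α k l).re : ℂ) * v α i j := by
      rw [he1, Finset.mul_sum]
      exact Finset.sum_congr rfl fun α _ => by rw [hc1 α]; ring
    have hXval : X1 i j = (if k = i ∧ l = j then (1:ℂ) else 0) - (if l = i ∧ k = j then 1 else 0) := by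
      simp [hX1def, Matrix.single]
    rw [hXval] at hXij
    linear_combination -hXij / 2
  -- second equation (imaginary parts)
  set X2 : Matrix (Fin N) (Fin N) ℂ := Complex.I • (Matrix.single k l 1 + Matrix.single l k 1) with hX2def
  have hX2h : X2ᴴ = -X2 := by
    rw [hX2def, conjTranspose_smul, conjTranspose_add, std_conjT, std_conjT]
    simp [Complex.star_def, Complex.conj_I, neg_smul, add_comm]
  have he2 := entry_eq v X2 (hcomp X2 hX2h) i j
  have hc2 : ∀ α, ((Matrix.trace (X2 * (v α)ᴴ)).re : ℂ) = 2 * ((v α k l).im : ℂ) := by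
    intro α
    have h1 : Matrix.trace (X2 * (v α)ᴴ) =
        Complex.I * (star (v α k l) + star (v α l k)) := by
      rw [hX2def, smul_mul_assoc, trace_smul, add_mul, trace_add, trace_std, trace_std,
        conjTranspose_apply, conjTranspose_apply, smul_eq_mul]
    have him : (v α l k).im = (v α k l).im := by
      have := congrArg Complex.im (hvc α k l)
      simp at this
      linarith
    rw [h1]
    simp only [Complex.mul_re, Complex.I_re, Complex.I_im, Complex.add_re, Complex.add_im,
      Complex.star_def, Complex.conj_re, Complex.conj_im, him]
    push_cast
    ring
  have h2 : ∑ α, ((v α k l).im : ℂ) * v α i j =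
      (1/2 : ℂ) * (Complex.I * ((if k = i ∧ l = j then 1 else 0) + (if l = i ∧ k = j then 1 else 0))) := by
    have hXij : X2 i j = 2 * ∑ α, ((v α k l).im : ℂ) * v α i j := by
      rw [he2, Finset.mul_sum]
      exact Finset.sum_congr rfl fun α _ => by rw [hc2 α]; ring
    have hXval : X2 i j = Complex.I * ((if k = i ∧ l = j then (1:ℂ) else 0) + (if l = i ∧ k = j then 1 else 0)) := by
      simp [hX2def, Matrix.single, mul_add]
    rw [hXval] at hXij
    linear_combination -hXij / 2
  have hsplit : ∑ α, v α k l * v α i j =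
      (∑ α, ((v α k l).re : ℂ) * v α i j) + Complex.I * ∑ α, ((v α k l).im : ℂ) * v α i j := by
    rw [Finset.mul_sum, ← Finset.sum_add_distrib]
    exact Finset.sum_congr rfl fun α _ => mul_split _ _
  rw [hsplit, h1, h2]
  linear_combination ((1:ℂ)/2 * ((if k = i ∧ l = j then (1:ℂ) else 0) + (if l = i ∧ k = j then 1 else 0))) * Complex.I_mul_I

lemma su_rel {N : ℕ} {ι : Type} [Fintype ι] (hN : N ≠ 0) (v : ι → Matrix (Fin N) (Fin N) ℂ)
    (hv : ∀ α, (v α)ᴴ = -(v α) ∧ Matrix.trace (v α) = 0)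
    (hcomp : ∀ X : Matrix (Fin N) (Fin N) ℂ, Xᴴ = -X → Matrix.trace X = 0 →
        X = ∑ α, (Matrix.trace (X * (v α)ᴴ)).re • v α)
    (i j k l : Fin N) :
    ∑ α, v α k l * v α i j =
      -(if l = i ∧ k = j then (1:ℂ) else 0) + (if k = l ∧ i = j then (1:ℂ) else 0) / N := by
  have hNC : (N : ℂ) ≠ 0 := Nat.cast_ne_zero.mpr hN
  have hvc : ∀ α (a b : Fin N), (starRingEnd ℂ) (v α b a) = -(v α a b) := by
    intro α a b
    have := congrFun (congrFun (hv α).1 a) b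
    simpa [conjTranspose_apply] using this
  have hsplit : ∑ α, v α k l * v α i j =
      (∑ α, ((v α k l).re : ℂ) * v α i j) + Complex.I * ∑ α, ((v α k l).im : ℂ) * v α i j := by
    rw [Finset.mul_sum, ← Finset.sum_add_distrib]
    exact Finset.sum_congr rfl fun α _ => mul_split _ _
  by_cases hkl : k = l
  · -- diagonal case
    subst hkl
    have hre0 : ∀ α, ((v α k k).re : ℂ) = 0 := by
      intro α
      have := congrArg Complex.re (hvc α k k)
      simp only [Complex.conj_re, Complex.neg_re] at this
      norm_cast
      linarith
    set X3 : Matrix (Fin N) (Fin N) ℂ :=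
      Complex.I • Matrix.single k k 1 - (Complex.I / N) • 1 with hX3def
    have hX3h : X3ᴴ = -X3 := by
      rw [hX3def, conjTranspose_sub, conjTranspose_smul, conjTranspose_smul, std_conjT,
        conjTranspose_one]
      simp only [Complex.star_def, map_div₀, Complex.conj_I, Complex.conj_natCast]
      module
    have hX3tr : Matrix.trace X3 = 0 := by
      rw [hX3def, trace_sub, trace_smul, trace_smul, trace_one, trace_single_eq_same]
      simp only [smul_eq_mul, Fintype.card_fin, mul_one]
      field_simp
      simp
    have he3 := entry_eq v X3 (hcomp X3 hX3h hX3tr) i j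
    have hc3 : ∀ α, ((Matrix.trace (X3 * (v α)ᴴ)).re : ℂ) = ((v α k k).im : ℂ) := by
      intro α
      have h1 : Matrix.trace (X3 * (v α)ᴴ) = Complex.I * star (v α k k) := by
        rw [hX3def, sub_mul, trace_sub, smul_mul_assoc, trace_smul, trace_std,
          conjTranspose_apply, smul_mul_assoc, one_mul, trace_smul, trace_conjTranspose,
          (hv α).2]
        simp
      rw [h1]
      norm_num [Complex.mul_re, Complex.star_def]
    have h3 : ∑ α, ((v α k k).im : ℂ) * v α i j =
        Complex.I * (if k = i ∧ k = j then (1:ℂ) else 0) -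
          (Complex.I / N) * (if i = j then 1 else 0) := by
      have hXval : X3 i j = Complex.I * (if k = i ∧ k = j then (1:ℂ) else 0) -
          (Complex.I / N) * (if i = j then 1 else 0) := by
        simp [hX3def, Matrix.single, one_apply]
      rw [← hXval, he3]
      exact Finset.sum_congr rfl fun α _ => by rw [hc3 α]
    rw [hsplit]
    simp only [hre0, zero_mul, Finset.sum_const_zero, zero_add, h3]
    simp only [eq_self_iff_true, true_and]
    linear_combination ((if k = i ∧ k = j then (1:ℂ) else 0) -
      (if i = j then (1:ℂ) else 0)/(N:ℂ)) * Complex.I_mul_I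
  · -- off-diagonal case
    set X1 : Matrix (Fin N) (Fin N) ℂ := Matrix.single k l 1 - Matrix.single l k 1 with hX1def
    have hX1h : X1ᴴ = -X1 := by
      rw [hX1def, conjTranspose_sub, std_conjT, std_conjT]
      exact (neg_sub _ _).symm
    have hX1tr : Matrix.trace X1 = 0 := by
      rw [hX1def, trace_sub, trace_single_eq_of_ne _ _ _ hkl,
        trace_single_eq_of_ne _ _ _ (fun h => hkl h.symm), sub_zero]
    have he1 := entry_eq v X1 (hcomp X1 hX1h hX1tr) i j
    have hc1 : ∀ α, ((Matrix.trace (X1 * (v α)ᴴ)).re : ℂ) = 2 * ((v α k l).re : ℂ) := by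
      intro α
      have h1 : Matrix.trace (X1 * (v α)ᴴ) = star (v α k l) - star (v α l k) := by
        rw [hX1def, sub_mul, trace_sub, trace_std, trace_std, conjTranspose_apply,
          conjTranspose_apply]
      have hre : (v α l k).re = -(v α k l).re := by
        have := congrArg Complex.re (hvc α k l)
        simpa using this
      rw [h1]
      simp only [Complex.sub_re, Complex.star_def, Complex.conj_re, hre]
      push_cast
      ring
    have h1 : ∑ α, ((v α k l).re : ℂ) * v α i j =
        (1/2 : ℂ) * ((if k = i ∧ l = j then 1 else 0) - (if l = i ∧ k = j then 1 else 0)) := by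
      have hXij : X1 i j = 2 * ∑ α, ((v α k l).re : ℂ) * v α i j := by
        rw [he1, Finset.mul_sum]
        exact Finset.sum_congr rfl fun α _ => by rw [hc1 α]; ring
      have hXval : X1 i j = (if k = i ∧ l = j then (1:ℂ) else 0) -
          (if l = i ∧ k = j then 1 else 0) := by
        simp [hX1def, Matrix.single]
      rw [hXval] at hXij
      linear_combination -hXij / 2
    set X2 : Matrix (Fin N) (Fin N) ℂ :=
      Complex.I • (Matrix.single k l 1 + Matrix.single l k 1) with hX2def
    have hX2h : X2ᴴ = -X2 := by
      rw [hX2def, conjTranspose_smul, conjTranspose_add, std_conjT, std_conjT]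
      simp [Complex.star_def, Complex.conj_I, neg_smul, add_comm]
    have hX2tr : Matrix.trace X2 = 0 := by
      rw [hX2def, trace_smul, trace_add, trace_single_eq_of_ne _ _ _ hkl,
        trace_single_eq_of_ne _ _ _ (fun h => hkl h.symm), add_zero, smul_zero]
    have he2 := entry_eq v X2 (hcomp X2 hX2h hX2tr) i j
    have hc2 : ∀ α, ((Matrix.trace (X2 * (v α)ᴴ)).re : ℂ) = 2 * ((v α k l).im : ℂ) := by
      intro α
      have h1 : Matrix.trace (X2 * (v α)ᴴ) =
          Complex.I * (star (v α k l) + star (v α l k)) := by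
        rw [hX2def, smul_mul_assoc, trace_smul, add_mul, trace_add, trace_std, trace_std,
          conjTranspose_apply, conjTranspose_apply, smul_eq_mul]
      have him : (v α l k).im = (v α k l).im := by
        have := congrArg Complex.im (hvc α k l)
        simp at this
        linarith
      rw [h1]
      simp only [Complex.mul_re, Complex.I_re, Complex.I_im, Complex.add_re, Complex.add_im,
        Complex.star_def, Complex.conj_re, Complex.conj_im, him]
      push_cast
      ring
    have h2 : ∑ α, ((v α k l).im : ℂ) * v α i j =
        (1/2 : ℂ) * (Complex.I * ((if k = i ∧ l = j then 1 else 0) +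
          (if l = i ∧ k = j then 1 else 0))) := by
      have hXij : X2 i j = 2 * ∑ α, ((v α k l).im : ℂ) * v α i j := by
        rw [he2, Finset.mul_sum]
        exact Finset.sum_congr rfl fun α _ => by rw [hc2 α]; ring
      have hXval : X2 i j = Complex.I * ((if k = i ∧ l = j then (1:ℂ) else 0) +
          (if l = i ∧ k = j then 1 else 0)) := by
        simp [hX2def, Matrix.single, mul_add]
      rw [hXval] at hXij
      linear_combination -hXij / 2
    rw [hsplit, h1, h2]
    have hkl' : (if k = l ∧ i = j then (1:ℂ) else 0) = 0 := by simp [hkl]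
    rw [hkl', zero_div, add_zero]
    linear_combination ((1:ℂ)/2 * ((if k = i ∧ l = j then (1:ℂ) else 0) +
      (if l = i ∧ k = j then 1 else 0))) * Complex.I_mul_I

lemma assemble {N : ℕ} {ι : Type} [Fintype ι] (v : ι → Matrix (Fin N) (Fin N) ℂ)
    (M : Matrix (Fin N) (Fin N) ℂ) (i l : Fin N) :
    (∑ α, v α * M * v α) i l = ∑ j, ∑ k, M j k * (∑ α, v α i j * v α k l) := by
  have h : ∀ α, (v α * M * v α) i l = ∑ j, ∑ k, M j k * (v α i j * v α k l) := by
    intro α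
    simp only [Matrix.mul_apply, Finset.sum_mul]
    rw [Finset.sum_comm]
    exact Finset.sum_congr rfl fun j _ => Finset.sum_congr rfl fun k _ => by ring
  simp only [Matrix.sum_apply, h]
  rw [Finset.sum_comm]
  refine Finset.sum_congr rfl fun j _ => ?_
  rw [Finset.sum_comm]
  exact Finset.sum_congr rfl fun k _ => (Finset.mul_sum _ _ _).symm

/-- Magic formula (quadratic form): for any `M ∈ M_N(ℂ)` and any orthonormal basis `(v_α)`
of `g ∈ {so(N), u(N), su(N)}` under `⟨X,Y⟩ = Re Tr(X Yᴴ)`,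
`∑_α v_α M v_α = λ Tr(M) I + ν M + μ Mᵀ` with `(λ,ν,μ) = (−1/2, 0, 1/2)` for `so(N)`,
`(−1, 0, 0)` for `u(N)`, and `(−1, 1/N, 0)` for `su(N)`. -/
theorem stmt8 (N : ℕ) (ι : Type) [Fintype ι] [DecidableEq ι]
    (v : ι → Matrix (Fin N) (Fin N) ℂ) (M : Matrix (Fin N) (Fin N) ℂ)
    (horth : ∀ α β, (Matrix.trace (v α * (v β)ᴴ)).re = if α = β then 1 else 0) :
    -- so(N) case
    ((∀ α, (v α)ᵀ = -(v α) ∧ ∀ i j, ((v α) i j).im = 0) →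
      (∀ X : Matrix (Fin N) (Fin N) ℂ, Xᵀ = -X → (∀ i j, (X i j).im = 0) →
        X = ∑ α, (Matrix.trace (X * (v α)ᴴ)).re • v α) →
      ∑ α, v α * M * v α = ((-1 / 2 : ℂ) * Matrix.trace M) • 1 + (1 / 2 : ℂ) • Mᵀ) ∧
    -- u(N) case
    ((∀ α, (v α)ᴴ = -(v α)) →
      (∀ X : Matrix (Fin N) (Fin N) ℂ, Xᴴ = -X →
        X = ∑ α, (Matrix.trace (X * (v α)ᴴ)).re • v α) →
      ∑ α, v α * M * v α = ((-1 : ℂ) * Matrix.trace M) • 1) ∧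
    -- su(N) case
    ((∀ α, (v α)ᴴ = -(v α) ∧ Matrix.trace (v α) = 0) →
      (∀ X : Matrix (Fin N) (Fin N) ℂ, Xᴴ = -X → Matrix.trace X = 0 →
        X = ∑ α, (Matrix.trace (X * (v α)ᴴ)).re • v α) →
      ∑ α, v α * M * v α = ((-1 : ℂ) * Matrix.trace M) • 1 + (1 / (N : ℂ)) • M) := by
  refine ⟨?_, ?_, ?_⟩
  · intro hv hcomp
    ext i l
    rw [assemble]
    simp only [so_rel v hv hcomp]
    simp [Finset.mul_sum, mul_sub, Finset.sum_sub_distrib, ite_and, mul_ite, mul_one, mul_zero,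
      Finset.sum_ite_eq, Finset.sum_ite_eq', Matrix.add_apply, Matrix.smul_apply,
      Matrix.one_apply, Matrix.transpose_apply, smul_eq_mul, Matrix.trace, Matrix.diag]
    split_ifs <;> (try simp only [← Finset.mul_sum, ← Finset.sum_mul]) <;> ring
  · intro hv hcomp
    ext i l
    rw [assemble]
    simp only [u_rel v hv hcomp]
    simp [Finset.mul_sum, mul_sub, Finset.sum_sub_distrib, ite_and, mul_ite, mul_one, mul_zero,
      Finset.sum_ite_eq, Finset.sum_ite_eq', Matrix.smul_apply,
      Matrix.one_apply, smul_eq_mul, Matrix.trace, Matrix.diag]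
    split_ifs <;> (try simp only [← Finset.mul_sum, ← Finset.sum_mul]) <;> ring
  · intro hv hcomp
    by_cases hN : N = 0
    · subst hN
      ext i l
      exact i.elim0
    ext i l
    rw [assemble]
    simp only [su_rel hN v hv hcomp]
    simp [Finset.mul_sum, mul_add, mul_neg, Finset.sum_add_distrib, Finset.sum_neg_distrib,
      ite_and, mul_ite, mul_one, mul_zero, Finset.sum_ite_eq, Finset.sum_ite_eq',
      Matrix.add_apply, Matrix.smul_apply, Matrix.one_apply, smul_eq_mul,
      Matrix.trace, Matrix.diag]
    simp only [div_eq_mul_inv, mul_ite, ite_mul, mul_one, one_mul, mul_zero, zero_mul,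
      Finset.sum_ite_irrel, Finset.sum_const_zero, Finset.sum_ite_eq, Finset.sum_ite_eq',
      Finset.mem_univ, if_true]
    try split_ifs
    all_goals (try simp only [← Finset.mul_sum, ← Finset.sum_mul])
    all_goals ring
end

section
/- Magic formula (trace form): for any N×N complex matrices M and P and any orthonormal basis (v_α) of the Lie algebra g ∈ {so(N), u(N), su(N)}, the sum over α of Tr(v_α M) Tr(v_α P) equals λ Tr(MP) + ν Tr(M)Tr(P) + μ Tr(M Pᵗ), where (λ,ν,μ) = (−1/2, 0, 1/2) for so(N), (−1, 0, 0) for u(N), and (−1, 1/N, 0) for su(N). -/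
open Matrix

/-- Real scalar expansion lemma: trace against Y of a basis expansion. -/
private lemma magic_key {N : ℕ} {ι : Type} [Fintype ι]
    (v : ι → Matrix (Fin N) (Fin N) ℂ)
    (hanti : ∀ α, (v α)ᴴ = -v α)
    (X : Matrix (Fin N) (Fin N) ℂ) (hX : Xᴴ = -X)
    (hexp : X = ∑ α, (Matrix.trace (X * (v α)ᴴ)).re • v α)
    (Y : Matrix (Fin N) (Fin N) ℂ) :
    ∑ α, Matrix.trace (v α * X) * Matrix.trace (v α * Y)
      = -Matrix.trace (X * Y) := by
  have hreal : ∀ α, (Matrix.trace (v α * X)).im = 0 := by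
    intro α
    have h : (starRingEnd ℂ) (Matrix.trace (v α * X)) = Matrix.trace (v α * X) := by
      calc (starRingEnd ℂ) (Matrix.trace (v α * X))
          = Matrix.trace ((v α * X)ᴴ) := (Matrix.trace_conjTranspose _).symm
        _ = Matrix.trace (Xᴴ * (v α)ᴴ) := by rw [Matrix.conjTranspose_mul]
        _ = Matrix.trace (X * v α) := by rw [hX, hanti]; simp
        _ = Matrix.trace (v α * X) := Matrix.trace_mul_comm _ _
    exact Complex.conj_eq_iff_im.mp h
  have hcoef : ∀ α, ((Matrix.trace (X * (v α)ᴴ)).re : ℂ) = -Matrix.trace (v α * X) := by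
    intro α
    have h1 : Matrix.trace (X * (v α)ᴴ) = -Matrix.trace (v α * X) := by
      rw [hanti, Matrix.mul_neg, Matrix.trace_neg, Matrix.trace_mul_comm]
    rw [h1]
    simp [Complex.ext_iff, hreal α]
  have htr : Matrix.trace (X * Y)
      = ∑ α, ((Matrix.trace (X * (v α)ᴴ)).re : ℂ) * Matrix.trace (v α * Y) := by
    conv_lhs => rw [hexp]
    rw [Matrix.sum_mul, Matrix.trace_sum]
    refine Finset.sum_congr rfl fun α _ => ?_
    rw [Matrix.smul_mul, Matrix.trace_smul, Complex.real_smul]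
  rw [htr]
  simp only [hcoef]
  simp [neg_mul]

private lemma real_antisym_antiherm {N : ℕ} {A : Matrix (Fin N) (Fin N) ℂ}
    (h1 : Aᵀ = -A) (h2 : ∀ i j, (A i j).im = 0) : Aᴴ = -A := by
  ext i j
  have h3 : A j i = -A i j := by
    have := congrFun (congrFun h1 i) j
    simpa [Matrix.transpose_apply, Matrix.neg_apply] using this
  simp only [Matrix.conjTranspose_apply, Matrix.neg_apply]
  rw [show star (A j i) = (starRingEnd ℂ) (A j i) from rfl,
    Complex.conj_eq_iff_im.mpr (h2 j i), h3]

/-- Magic formula (trace form): for any `M, P ∈ M_N(ℂ)` and any orthonormal basis `(v_α)`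
of `g ∈ {so(N), u(N), su(N)}` under `⟨X,Y⟩ = Re Tr(X Yᴴ)`,
`∑_α Tr(v_α M) Tr(v_α P) = λ Tr(MP) + ν Tr(M)Tr(P) + μ Tr(M Pᵀ)` with
`(λ,ν,μ) = (−1/2, 0, 1/2)` for `so(N)`, `(−1, 0, 0)` for `u(N)`, `(−1, 1/N, 0)` for `su(N)`. -/
theorem stmt9 (N : ℕ) (ι : Type) [Fintype ι] [DecidableEq ι]
    (v : ι → Matrix (Fin N) (Fin N) ℂ) (M P : Matrix (Fin N) (Fin N) ℂ)
    (horth : ∀ α β, (Matrix.trace (v α * (v β)ᴴ)).re = if α = β then 1 else 0) :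
    -- so(N) case
    ((∀ α, (v α)ᵀ = -(v α) ∧ ∀ i j, ((v α) i j).im = 0) →
      (∀ X : Matrix (Fin N) (Fin N) ℂ, Xᵀ = -X → (∀ i j, (X i j).im = 0) →
        X = ∑ α, (Matrix.trace (X * (v α)ᴴ)).re • v α) →
      ∑ α, Matrix.trace (v α * M) * Matrix.trace (v α * P) =
        (-1 / 2 : ℂ) * Matrix.trace (M * P) + (1 / 2 : ℂ) * Matrix.trace (M * Pᵀ)) ∧
    -- u(N) case
    ((∀ α, (v α)ᴴ = -(v α)) →
      (∀ X : Matrix (Fin N) (Fin N) ℂ, Xᴴ = -X →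
        X = ∑ α, (Matrix.trace (X * (v α)ᴴ)).re • v α) →
      ∑ α, Matrix.trace (v α * M) * Matrix.trace (v α * P) =
        (-1 : ℂ) * Matrix.trace (M * P)) ∧
    -- su(N) case
    ((∀ α, (v α)ᴴ = -(v α) ∧ Matrix.trace (v α) = 0) →
      (∀ X : Matrix (Fin N) (Fin N) ℂ, Xᴴ = -X → Matrix.trace X = 0 →
        X = ∑ α, (Matrix.trace (X * (v α)ᴴ)).re • v α) →
      ∑ α, Matrix.trace (v α * M) * Matrix.trace (v α * P) =
        (-1 : ℂ) * Matrix.trace (M * P)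
          + (1 / (N : ℂ)) * Matrix.trace M * Matrix.trace P) := by
  refine ⟨?_, ?_, ?_⟩
  · -- so(N)
    intro hso hexp
    have hvH : ∀ α, (v α)ᴴ = -v α := fun α =>
      real_antisym_antiherm (hso α).1 (hso α).2
    set A : Matrix (Fin N) (Fin N) ℂ :=
      Matrix.of fun i j => (((2⁻¹ : ℝ) * (M i j - M j i).re : ℝ) : ℂ) with hA
    set B : Matrix (Fin N) (Fin N) ℂ :=
      Matrix.of fun i j => (((2⁻¹ : ℝ) * (M i j - M j i).im : ℝ) : ℂ) with hB
    set S : Matrix (Fin N) (Fin N) ℂ := (2⁻¹ : ℂ) • (M + Mᵀ) with hS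
    have hAt : Aᵀ = -A := by
      ext i j
      simp only [hA, Matrix.transpose_apply, Matrix.neg_apply, Matrix.of_apply,
        Complex.sub_re]
      push_cast
      ring
    have hBt : Bᵀ = -B := by
      ext i j
      simp only [hB, Matrix.transpose_apply, Matrix.neg_apply, Matrix.of_apply,
        Complex.sub_im]
      push_cast
      ring
    have hAim : ∀ i j, (A i j).im = 0 := by intro i j; simp [hA]
    have hBim : ∀ i j, (B i j).im = 0 := by intro i j; simp [hB]
    have hSsym : Sᵀ = S := by
      rw [hS, Matrix.transpose_smul, Matrix.transpose_add, Matrix.transpose_transpose,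
        add_comm]
    have hMdec : M = A + Complex.I • B + S := by
      ext i j
      simp only [hA, hB, hS, Matrix.add_apply, Matrix.smul_apply, Matrix.of_apply,
        Matrix.transpose_apply, smul_eq_mul]
      push_cast
      linear_combination (-(2⁻¹ : ℂ)) * Complex.re_add_im (M i j - M j i)
    have htrS : ∀ α, Matrix.trace (v α * S) = 0 := by
      intro α
      have h : Matrix.trace (v α * S) = -Matrix.trace (v α * S) := by
        conv_lhs => rw [← Matrix.trace_transpose (v α * S)]
        rw [Matrix.transpose_mul, hSsym, (hso α).1, Matrix.mul_neg, Matrix.trace_neg,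
          Matrix.trace_mul_comm]
      have h2 : (2 : ℂ) * Matrix.trace (v α * S) = 0 := by linear_combination h
      simpa using h2
    have htrM : ∀ α, Matrix.trace (v α * M)
        = Matrix.trace (v α * A) + Complex.I * Matrix.trace (v α * B) := by
      intro α
      conv_lhs => rw [hMdec]
      rw [Matrix.mul_add, Matrix.mul_add, Matrix.trace_add, Matrix.trace_add,
        htrS α, add_zero, Matrix.mul_smul, Matrix.trace_smul, smul_eq_mul]
    have keyA := magic_key v hvH A (real_antisym_antiherm hAt hAim)
      (hexp A hAt hAim) P
    have keyB := magic_key v hvH B (real_antisym_antiherm hBt hBim)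
      (hexp B hBt hBim) P
    have hsum : ∑ α, Matrix.trace (v α * M) * Matrix.trace (v α * P)
        = (∑ α, Matrix.trace (v α * A) * Matrix.trace (v α * P))
          + Complex.I * ∑ α, Matrix.trace (v α * B) * Matrix.trace (v α * P) := by
      rw [Finset.mul_sum, ← Finset.sum_add_distrib]
      refine Finset.sum_congr rfl fun α _ => ?_
      rw [htrM α]; ring
    have htrMP : Matrix.trace (M * P) = Matrix.trace (A * P)
        + Complex.I * Matrix.trace (B * P) + Matrix.trace (S * P) := by
      conv_lhs => rw [hMdec]
      rw [Matrix.add_mul, Matrix.add_mul, Matrix.trace_add, Matrix.trace_add,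
        Matrix.smul_mul, Matrix.trace_smul, smul_eq_mul]
    have htrSP : Matrix.trace (S * P)
        = (2⁻¹ : ℂ) * (Matrix.trace (M * P) + Matrix.trace (Mᵀ * P)) := by
      rw [hS, Matrix.smul_mul, Matrix.trace_smul, smul_eq_mul, Matrix.add_mul,
        Matrix.trace_add]
    have htrT : Matrix.trace (Mᵀ * P) = Matrix.trace (M * Pᵀ) := by
      rw [← Matrix.trace_transpose (Mᵀ * P), Matrix.transpose_mul,
        Matrix.transpose_transpose, Matrix.trace_mul_comm]
    rw [hsum, keyA, keyB]
    rw [htrT] at htrSP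
    linear_combination htrMP + htrSP
  · -- u(N)
    intro hanti hexp
    obtain ⟨A, hA⟩ : ∃ A' : Matrix (Fin N) (Fin N) ℂ, A' = (2⁻¹ : ℂ) • (M - Mᴴ) := ⟨_, rfl⟩
    obtain ⟨B, hB⟩ : ∃ B' : Matrix (Fin N) (Fin N) ℂ,
      B' = (-(2⁻¹) * Complex.I) • (M + Mᴴ) := ⟨_, rfl⟩
    have hs1 : star (2⁻¹ : ℂ) = 2⁻¹ := by simp
    have hs2 : star (-(2⁻¹) * Complex.I) = -(-(2⁻¹) * Complex.I) := by
      simp [Complex.ext_iff]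
    have hAanti : Aᴴ = -A := by
      rw [hA, Matrix.conjTranspose_smul, hs1, Matrix.conjTranspose_sub,
        Matrix.conjTranspose_conjTranspose, ← neg_sub, smul_neg]
    have hBanti : Bᴴ = -B := by
      rw [hB, Matrix.conjTranspose_smul, hs2, Matrix.conjTranspose_add,
        Matrix.conjTranspose_conjTranspose, add_comm, neg_smul]
    have hM : M = A + Complex.I • B := by
      rw [hA, hB, smul_smul,
        show Complex.I * (-(2⁻¹) * Complex.I) = 2⁻¹ by
          rw [mul_comm, mul_assoc, Complex.I_mul_I]; ring]
      module
    have htrM : ∀ α, Matrix.trace (v α * M)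
        = Matrix.trace (v α * A) + Complex.I * Matrix.trace (v α * B) := by
      intro α
      conv_lhs => rw [hM]
      rw [Matrix.mul_add, Matrix.trace_add, Matrix.mul_smul, Matrix.trace_smul,
        smul_eq_mul]
    have keyA := magic_key v hanti A hAanti (hexp A hAanti) P
    have keyB := magic_key v hanti B hBanti (hexp B hBanti) P
    have hsum : ∑ α, Matrix.trace (v α * M) * Matrix.trace (v α * P)
        = (∑ α, Matrix.trace (v α * A) * Matrix.trace (v α * P))
          + Complex.I * ∑ α, Matrix.trace (v α * B) * Matrix.trace (v α * P) := by
      rw [Finset.mul_sum, ← Finset.sum_add_distrib]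
      refine Finset.sum_congr rfl fun α _ => ?_
      rw [htrM α]; ring
    have htrMP : Matrix.trace (M * P) = Matrix.trace (A * P)
        + Complex.I * Matrix.trace (B * P) := by
      conv_lhs => rw [hM]
      rw [Matrix.add_mul, Matrix.trace_add, Matrix.smul_mul, Matrix.trace_smul,
        smul_eq_mul]
    rw [hsum, keyA, keyB, htrMP]
    ring
  · -- su(N)
    intro hsu hexp
    rcases Nat.eq_zero_or_pos N with hN | hN
    · subst hN
      have hz : ∀ X Y : Matrix (Fin 0) (Fin 0) ℂ, Matrix.trace (X * Y) = 0 := by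
        intro X Y; simp [Matrix.trace]
      simp [Matrix.trace]
    · have hNne : (N : ℂ) ≠ 0 := by
        exact Nat.cast_ne_zero.mpr hN.ne'
      have hvH : ∀ α, (v α)ᴴ = -v α := fun α => (hsu α).1
      have keySU : ∀ X : Matrix (Fin N) (Fin N) ℂ, Xᴴ = -X → ∀ Y,
          ∑ α, Matrix.trace (v α * X) * Matrix.trace (v α * Y)
            = -Matrix.trace (X * Y)
              + (Matrix.trace X / N) * Matrix.trace Y := by
        intro X hXa Y
        set X0 : Matrix (Fin N) (Fin N) ℂ := X - (Matrix.trace X / N) • 1 with hX0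
        have htrX : star (Matrix.trace X) = -Matrix.trace X := by
          rw [← Matrix.trace_conjTranspose, hXa, Matrix.trace_neg]
        have hst : star (Matrix.trace X / (N : ℂ)) = -(Matrix.trace X / N) := by
          rw [star_div₀, htrX]
          simp [neg_div]
        have hX0a : X0ᴴ = -X0 := by
          rw [hX0, Matrix.conjTranspose_sub, hXa, Matrix.conjTranspose_smul,
            Matrix.conjTranspose_one, hst]
          module
        have hX0tr : Matrix.trace X0 = 0 := by
          rw [hX0, Matrix.trace_sub, Matrix.trace_smul, Matrix.trace_one,
            smul_eq_mul]
          simp only [Fintype.card_fin]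
          field_simp
          ring
        have hsame : ∀ α, Matrix.trace (v α * X) = Matrix.trace (v α * X0) := by
          intro α
          rw [hX0, Matrix.mul_sub, Matrix.trace_sub, Matrix.mul_smul,
            Matrix.mul_one, Matrix.trace_smul, (hsu α).2]
          simp
        have hkey := magic_key v hvH X0 hX0a (hexp X0 hX0a hX0tr) Y
        calc ∑ α, Matrix.trace (v α * X) * Matrix.trace (v α * Y)
            = ∑ α, Matrix.trace (v α * X0) * Matrix.trace (v α * Y) := by
              simp only [hsame]
          _ = -Matrix.trace (X0 * Y) := hkey
          _ = -Matrix.trace (X * Y) + (Matrix.trace X / N) * Matrix.trace Y := by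
              rw [hX0, Matrix.sub_mul, Matrix.trace_sub, Matrix.smul_mul,
                Matrix.trace_smul, Matrix.one_mul, smul_eq_mul]
              ring
      obtain ⟨A, hA⟩ : ∃ A' : Matrix (Fin N) (Fin N) ℂ, A' = (2⁻¹ : ℂ) • (M - Mᴴ) := ⟨_, rfl⟩
      obtain ⟨B, hB⟩ : ∃ B' : Matrix (Fin N) (Fin N) ℂ,
        B' = (-(2⁻¹) * Complex.I) • (M + Mᴴ) := ⟨_, rfl⟩
      have hs1 : star (2⁻¹ : ℂ) = 2⁻¹ := by simp
      have hs2 : star (-(2⁻¹) * Complex.I) = -(-(2⁻¹) * Complex.I) := by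
        simp [Complex.ext_iff]
      have hAanti : Aᴴ = -A := by
        rw [hA, Matrix.conjTranspose_smul, hs1, Matrix.conjTranspose_sub,
          Matrix.conjTranspose_conjTranspose, ← neg_sub, smul_neg]
      have hBanti : Bᴴ = -B := by
        rw [hB, Matrix.conjTranspose_smul, hs2, Matrix.conjTranspose_add,
          Matrix.conjTranspose_conjTranspose, add_comm, neg_smul]
      have hM : M = A + Complex.I • B := by
        rw [hA, hB, smul_smul,
          show Complex.I * (-(2⁻¹) * Complex.I) = 2⁻¹ by
            rw [mul_comm, mul_assoc, Complex.I_mul_I]; ring]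
        module
      have htrM : ∀ α, Matrix.trace (v α * M)
          = Matrix.trace (v α * A) + Complex.I * Matrix.trace (v α * B) := by
        intro α
        conv_lhs => rw [hM]
        rw [Matrix.mul_add, Matrix.trace_add, Matrix.mul_smul, Matrix.trace_smul,
          smul_eq_mul]
      have keyA := keySU A hAanti P
      have keyB := keySU B hBanti P
      have hsum : ∑ α, Matrix.trace (v α * M) * Matrix.trace (v α * P)
          = (∑ α, Matrix.trace (v α * A) * Matrix.trace (v α * P))
            + Complex.I * ∑ α, Matrix.trace (v α * B) * Matrix.trace (v α * P) := by
        rw [Finset.mul_sum, ← Finset.sum_add_distrib]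
        refine Finset.sum_congr rfl fun α _ => ?_
        rw [htrM α]; ring
      have htrMP : Matrix.trace (M * P) = Matrix.trace (A * P)
          + Complex.I * Matrix.trace (B * P) := by
        conv_lhs => rw [hM]
        rw [Matrix.add_mul, Matrix.trace_add, Matrix.smul_mul, Matrix.trace_smul,
          smul_eq_mul]
      have htrMt : Matrix.trace M = Matrix.trace A + Complex.I * Matrix.trace B := by
        conv_lhs => rw [hM]
        rw [Matrix.trace_add, Matrix.trace_smul, smul_eq_mul]
      rw [hsum, keyA, keyB, htrMP, htrMt]
      field_simp
      ring
end
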